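/- arXiv:1110.1864 — 3 statements merged into one kernel-verified Lean document; each statement's English description precedes it below -/
import Mathlib

section
/- If A is a computably enumerable real such that A is not K-trivial, then there exists a computably enumerable set B which is not K-trivial and satisfies B ≤_K A. -/
open Part Filter

open scoped Classical

namespace KPaper

/-- Binary strings. -/
abbrev Str := List Bool

/-! ### Oracle (Turing) reducibility -/

/-- The functions `ℕ →. ℕ` that are partial recursive relative to an oracle `O : ℕ →. ℕ`.
This mirrors Mathlib's `Nat.Partrec`, with an extra base case for the oracle. -/
inductive RecursiveIn (O : ℕ →. ℕ) : (ℕ →. ℕ) → Prop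
  | oracle : RecursiveIn O O
  | zero : RecursiveIn O (pure 0)
  | succ : RecursiveIn O ↑Nat.succ
  | left : RecursiveIn O ↑fun n : ℕ => n.unpair.1
  | right : RecursiveIn O ↑fun n : ℕ => n.unpair.2
  | pair {f g} : RecursiveIn O f → RecursiveIn O g →
      RecursiveIn O fun n => Nat.pair <$> f n <*> g n
  | comp {f g} : RecursiveIn O f → RecursiveIn O g → RecursiveIn O fun n => g n >>= f
  | prec {f g} : RecursiveIn O f → RecursiveIn O g → RecursiveIn O (Nat.unpaired fun a n =>
      n.rec (f a) fun y IH => do let i ← IH; g (Nat.pair a (Nat.pair y i)))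
  | rfind {f} : RecursiveIn O f →
      RecursiveIn O fun a => Nat.rfind fun n => (fun m => m = 0) <$> f (Nat.pair a n)

/-- The characteristic (partial) function of a set of naturals, used as a Turing oracle. -/
noncomputable def chi (A : Set ℕ) : ℕ →. ℕ := fun n => Part.some (if n ∈ A then 1 else 0)

/-- The characteristic function of an infinite binary sequence, used as a Turing oracle. -/
def chiSeq (X : ℕ → Bool) : ℕ →. ℕ := fun n => Part.some (cond (X n) 1 0)

/-- `A` is Turing reducible to `B`. -/
noncomputable def TuringLeSet (A B : Set ℕ) : Prop := RecursiveIn (chi B) (chi A)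

/-- `A` is Turing equivalent to `B`. -/
noncomputable def TuringEquivSet (A B : Set ℕ) : Prop := TuringLeSet A B ∧ TuringLeSet B A

/-- Turing equivalence between a set and an infinite binary sequence. -/
noncomputable def TuringEquivSetSeq (A : Set ℕ) (X : ℕ → Bool) : Prop :=
  RecursiveIn (chiSeq X) (chi A) ∧ RecursiveIn (chi A) (chiSeq X)

/-- The halting problem `∅'`. -/
def haltingSet : Set ℕ := {n | ((Denumerable.ofNat Nat.Partrec.Code n).eval n).Dom}

/-- A set of naturals is computably enumerable iff it is the domain of a
partial computable function. -/
def CESet (A : Set ℕ) : Prop := ∃ f : ℕ →. ℕ, Nat.Partrec f ∧ ∀ n, n ∈ A ↔ (f n).Dom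

/-! ### Machines and Kolmogorov complexity -/

/-- A (plain) machine is a partial computable map from binary strings to binary strings. -/
def PlainMachine (M : Str →. Str) : Prop := Partrec M

/-- A prefix-free machine: a partial computable map on binary strings whose
domain is an antichain under the prefix relation. -/
def PFMachine (M : Str →. Str) : Prop :=
  Partrec M ∧ ∀ ρ₁ ρ₂ : Str, (M ρ₁).Dom → (M ρ₂).Dom → ρ₁ <+: ρ₂ → ρ₁ = ρ₂

/-- The Kolmogorov complexity of a string `σ` with respect to a machine `M`:
the least length of an `M`-description of `σ` (`⊤` if there is none). -/
noncomputable def KC (M : Str →. Str) (σ : Str) : ℕ∞ :=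
  ⨅ ρ : {ρ : Str // σ ∈ M ρ}, ((ρ : Str).length : ℕ∞)

/-- An optimal prefix-free machine: a prefix-free machine whose associated complexity
is minimal, up to an additive constant, among all prefix-free machines. -/
def OptimalPF (U : Str →. Str) : Prop :=
  PFMachine U ∧ ∀ M : Str →. Str, PFMachine M → ∃ c : ℕ, ∀ σ : Str, KC U σ ≤ KC M σ + c

/-- An optimal plain machine. -/
def OptimalPlain (V : Str →. Str) : Prop :=
  PlainMachine V ∧ ∀ M : Str →. Str, PlainMachine M → ∃ c : ℕ, ∀ σ : Str, KC V σ ≤ KC M σ + c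

/-! ### Initial segments -/

/-- The first `n` bits of the characteristic sequence of a set of naturals. -/
noncomputable def restrSet (A : Set ℕ) (n : ℕ) : Str :=
  (List.range n).map fun i => decide (i ∈ A)

/-- The first `n` bits of an infinite binary sequence. -/
def restrSeq (X : ℕ → Bool) (n : ℕ) : Str := (List.range n).map X

/-- The string `0^n`; `K(n)` is identified with `K(0^n)`. -/
def zeroStr (n : ℕ) : Str := List.replicate n false

/-! ### `≤_K`, `<_K`, `K`-triviality (and the `≤_C` analogues) -/

def KLeSet (U : Str →. Str) (A B : Set ℕ) : Prop :=
  ∃ c : ℕ, ∀ n, KC U (restrSet A n) ≤ KC U (restrSet B n) + c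

def KLtSet (U : Str →. Str) (A B : Set ℕ) : Prop := KLeSet U A B ∧ ¬ KLeSet U B A

def KTrivialSet (U : Str →. Str) (A : Set ℕ) : Prop :=
  ∃ c : ℕ, ∀ n, KC U (restrSet A n) ≤ KC U (zeroStr n) + c

def KLeSeq (U : Str →. Str) (X Y : ℕ → Bool) : Prop :=
  ∃ c : ℕ, ∀ n, KC U (restrSeq X n) ≤ KC U (restrSeq Y n) + c

def KLtSeq (U : Str →. Str) (X Y : ℕ → Bool) : Prop := KLeSeq U X Y ∧ ¬ KLeSeq U Y X

def KTrivialSeq (U : Str →. Str) (X : ℕ → Bool) : Prop :=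
  ∃ c : ℕ, ∀ n, KC U (restrSeq X n) ≤ KC U (zeroStr n) + c

/-! ### Computably enumerable reals -/

/-- The real number in `[0,1]` whose binary expansion is the sequence `X`. -/
noncomputable def realOfSeq (X : ℕ → Bool) : ℝ := ∑' i : ℕ, cond (X i) ((2 : ℝ) ^ (i + 1))⁻¹ 0

/-- `X` (identified with the real it is the binary expansion of) is a computably
enumerable real: it is the limit of a nondecreasing computable sequence of
(dyadic) rationals. -/
def CEReal (X : ℕ → Bool) : Prop :=
  ∃ f : ℕ → ℤ, Computable f ∧
    (∀ s, (f s : ℝ) / 2 ^ s ≤ (f (s + 1) : ℝ) / 2 ^ (s + 1)) ∧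
    Tendsto (fun s => (f s : ℝ) / 2 ^ s) atTop (nhds (realOfSeq X))

/-- The characteristic sequence of a set of naturals. -/
noncomputable def seqOfSet (A : Set ℕ) : ℕ → Bool := fun i => decide (i ∈ A)

/-! ### Solovay reducibility -/

/-- Solovay reducibility on c.e. reals: `X ≤_S Y` iff there are nondecreasing computable
rational approximations to `X` and `Y` and a constant `c` such that at each stage the
distance to `X` is bounded by `c` times the distance to `Y`. -/
def SolovayLe (X Y : ℕ → Bool) : Prop :=
  ∃ (c : ℕ) (f g : ℕ → ℤ), Computable f ∧ Computable g ∧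
    (∀ s, (f s : ℝ) / 2 ^ s ≤ (f (s + 1) : ℝ) / 2 ^ (s + 1)) ∧
    (∀ s, (g s : ℝ) / 2 ^ s ≤ (g (s + 1) : ℝ) / 2 ^ (s + 1)) ∧
    Tendsto (fun s => (f s : ℝ) / 2 ^ s) atTop (nhds (realOfSeq X)) ∧
    Tendsto (fun s => (g s : ℝ) / 2 ^ s) atTop (nhds (realOfSeq Y)) ∧
    ∀ s, realOfSeq X - (f s : ℝ) / 2 ^ s ≤ (c : ℝ) * (realOfSeq Y - (g s : ℝ) / 2 ^ s)



/-! ### Auxiliary machinery for the proof of Statement 3 -/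

section Stmt3Aux

/-- value of a binary string, MSB first -/
def val (τ : Str) : ℕ := τ.foldl (fun a b => 2 * a + cond b 1 0) 0

lemma val_append (τ : Str) (b : Bool) : val (τ ++ [b]) = 2 * val τ + cond b 1 0 := by
  simp [val, List.foldl_append]

lemma val_lt (τ : Str) : val τ < 2 ^ τ.length := by
  induction τ using List.reverseRecOn with
  | nil => simp [val]
  | append_singleton τ b ih =>
      rw [val_append]
      simp only [List.length_append, List.length_singleton, pow_add, pow_one]
      cases b <;> simp <;> omega

@[simp] lemma restrSeq_length (X : ℕ → Bool) (n : ℕ) : (restrSeq X n).length = n := by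
  simp [restrSeq]

lemma restrSeq_succ (X : ℕ → Bool) (n : ℕ) :
    restrSeq X (n + 1) = restrSeq X n ++ [X n] := by
  simp [restrSeq, List.range_succ]

lemma restrSeq_getD (X : ℕ → Bool) {i n : ℕ} (h : i < n) :
    (restrSeq X n).getD i false = X i := by
  rw [restrSeq, List.getD_eq_getElem?_getD]
  simp [List.getElem?_map, List.getElem?_range h]

lemma val_restrSeq_succ (X : ℕ → Bool) (n : ℕ) :
    val (restrSeq X (n + 1)) = 2 * val (restrSeq X n) + cond (X n) 1 0 := by
  rw [restrSeq_succ, val_append]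

lemma count_lt (m v : ℕ) :
    (((List.range m).map fun k => cond (decide (k < v)) 1 0).foldl (· + ·) 0) = min v m := by
  induction m with
  | zero => simp
  | succ m ih =>
      rw [List.range_succ, List.map_append, List.foldl_append, ih]
      by_cases h : m < v <;> simp [h] <;> omega

lemma pair_le_pair_left {a b : ℕ} (c : ℕ) (h : a ≤ b) : Nat.pair a c ≤ Nat.pair b c := by
  rcases h.lt_or_eq with h | h
  · exact (Nat.pair_lt_pair_left c h).le
  · rw [h]

/-! #### KC and the push lemma -/

lemma KC_le_of_mem {M : Str →. Str} {σ ρ : Str} (h : σ ∈ M ρ) :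
    KC M σ ≤ (ρ.length : ℕ∞) :=
  iInf_le (fun ρ : {ρ : Str // σ ∈ M ρ} => ((ρ : Str).length : ℕ∞)) ⟨ρ, h⟩

lemma kc_push {U : Str →. Str} (hU : OptimalPF U) {g : Str → Str} (hg : Computable g) :
    ∃ c : ℕ, ∀ σ : Str, KC U (g σ) ≤ KC U σ + c := by
  set M : Str →. Str := fun ρ => (U ρ).map g with hM
  have hMpf : PFMachine M := by
    constructor
    · exact Partrec.map hU.1.1 (hg.comp Computable.snd).to₂
    · intro ρ₁ ρ₂ h1 h2 hpre
      apply hU.1.2 ρ₁ ρ₂ _ _ hpre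
      · rw [Part.dom_iff_mem] at h1 ⊢
        obtain ⟨y, a, ha, -⟩ := by simpa [hM] using h1
        exact ⟨_, Part.get_mem a⟩
      · rw [Part.dom_iff_mem] at h2 ⊢
        obtain ⟨y, a, ha, -⟩ := by simpa [hM] using h2
        exact ⟨_, Part.get_mem a⟩
  obtain ⟨c, hc⟩ := hU.2 M hMpf
  refine ⟨c, fun σ => (hc (g σ)).trans (add_le_add_left ?_ _)⟩
  exact le_iInf fun ρ => KC_le_of_mem (Part.mem_map g ρ.2)

/-! #### Analysis of `realOfSeq` -/

section analysis
variable (A : ℕ → Bool)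

lemma term_nonneg (i : ℕ) : 0 ≤ cond (A i) ((2 : ℝ) ^ (i + 1))⁻¹ 0 := by
  cases A i
  · simp
  · simp only [cond]; positivity

lemma term_le (i : ℕ) : cond (A i) ((2 : ℝ) ^ (i + 1))⁻¹ 0 ≤ ((2 : ℝ) ^ (i + 1))⁻¹ := by
  cases A i
  · simp only [cond]; positivity
  · simp

lemma summable_geom : Summable (fun i : ℕ => ((2 : ℝ) ^ (i + 1))⁻¹) := by
  have : (fun i : ℕ => ((2 : ℝ) ^ (i + 1))⁻¹) = fun i : ℕ => (1 / 2 : ℝ) ^ (i + 1) := by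
    funext i; rw [one_div, inv_pow]
  rw [this]
  exact (summable_geometric_of_lt_one (by norm_num) (by norm_num)).comp_injective
    (add_left_injective 1)

lemma summable_term : Summable (fun i : ℕ => cond (A i) ((2 : ℝ) ^ (i + 1))⁻¹ 0) :=
  Summable.of_nonneg_of_le (term_nonneg A) (term_le A) summable_geom

lemma tsum_geom_tail (n : ℕ) : ∑' i : ℕ, ((2 : ℝ) ^ (i + n + 1))⁻¹ = ((2 : ℝ) ^ n)⁻¹ := by
  have h1 : ∀ i : ℕ, ((2 : ℝ) ^ (i + n + 1))⁻¹ = ((2:ℝ)^n)⁻¹ * (1/2 : ℝ)^(i+1) := by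
    intro i
    rw [one_div, inv_pow, ← mul_inv, ← pow_add]
    ring_nf
  simp only [h1]
  rw [tsum_mul_left]
  have : ∑' i : ℕ, (1/2 : ℝ) ^ (i + 1) = 1 := by
    have := tsum_geometric_of_lt_one (r := (1/2 : ℝ)) (by norm_num) (by norm_num)
    calc ∑' i : ℕ, (1/2 : ℝ) ^ (i + 1) = (1/2) * ∑' i : ℕ, (1/2 : ℝ) ^ i := by
          rw [tsum_mul_left.symm]; congr 1; funext i; ring
      _ = 1 := by rw [this]; norm_num
  rw [this, mul_one]

lemma partial_sum_eq (n : ℕ) :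
    ∑ i ∈ Finset.range n, cond (A i) ((2 : ℝ) ^ (i + 1))⁻¹ 0
      = (val (restrSeq A n) : ℝ) / 2 ^ n := by
  induction n with
  | zero => simp [restrSeq, val]
  | succ n ih =>
      rw [Finset.sum_range_succ, ih, val_restrSeq_succ]
      push_cast
      cases A n <;> simp <;> ring

lemma summable_tail (n : ℕ) :
    Summable (fun i : ℕ => cond (A (i + n)) ((2 : ℝ) ^ (i + n + 1))⁻¹ 0) :=
  ((summable_term A).comp_injective (add_left_injective n)).congr
    (fun i => by simp [Function.comp])

lemma realOfSeq_split (n : ℕ) :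
    realOfSeq A = (val (restrSeq A n) : ℝ) / 2 ^ n
      + ∑' i : ℕ, cond (A (i + n)) ((2 : ℝ) ^ (i + n + 1))⁻¹ 0 := by
  have h2 := Summable.sum_add_tsum_nat_add'
    (f := fun i => cond (A i) ((2 : ℝ) ^ (i + 1))⁻¹ 0) (k := n) (summable_tail A n)
  rw [realOfSeq, ← h2, partial_sum_eq]

lemma tail_le (n : ℕ) :
    ∑' i : ℕ, cond (A (i + n)) ((2 : ℝ) ^ (i + n + 1))⁻¹ 0 ≤ ((2 : ℝ) ^ n)⁻¹ := by
  rw [← tsum_geom_tail n]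
  refine Summable.tsum_le_tsum (fun i => term_le A _) (summable_tail A n) ?_
  exact (summable_geom.comp_injective (add_left_injective n)).congr
    (fun i => by simp [Function.comp])

lemma tail_pos (n : ℕ) (h : ∃ i, n ≤ i ∧ A i = true) :
    0 < ∑' i : ℕ, cond (A (i + n)) ((2 : ℝ) ^ (i + n + 1))⁻¹ 0 := by
  obtain ⟨i, hni, hAi⟩ := h
  have hterm : (0:ℝ) < cond (A (i - n + n)) ((2 : ℝ) ^ (i - n + n + 1))⁻¹ 0 := by
    rw [Nat.sub_add_cancel hni, hAi]
    simp only [cond]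
    positivity
  calc (0:ℝ) < cond (A (i - n + n)) ((2 : ℝ) ^ (i - n + n + 1))⁻¹ 0 := hterm
    _ ≤ _ := Summable.le_tsum (summable_tail A n) (i - n) (fun j _ => term_nonneg A _)

end analysis

/-! #### The approximation and the bridge between ℕ and ℝ inequalities -/

def squash (m : ℕ) : ℕ := if m % 2 = 0 then m / 2 else 0

lemma squash_encode (z : ℤ) : ((squash (Encodable.encode z) : ℤ)) = max z 0 := by
  cases z with
  | ofNat n =>
      have he : Encodable.encode (Int.ofNat n) = 2 * n := rfl
      rw [he]
      simp [squash, Int.ofNat_eq_natCast]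
  | negSucc n =>
      have he : Encodable.encode (Int.negSucc n) = 2 * n + 1 := rfl
      rw [he]
      simp [squash]

lemma primrec_squash : Primrec squash :=
  Primrec.ite
    (Primrec.eq.comp (Primrec.nat_mod.comp Primrec.id (Primrec.const 2)) (Primrec.const 0))
    (Primrec.nat_div.comp Primrec.id (Primrec.const 2)) (Primrec.const 0)

section approx
variable {f : ℕ → ℤ} {α : ℝ}

lemma approx_le_lim (hmono : ∀ s, (f s : ℝ) / 2 ^ s ≤ (f (s + 1) : ℝ) / 2 ^ (s + 1))
    (htend : Tendsto (fun s => (f s : ℝ) / 2 ^ s) atTop (nhds α)) :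
    ∀ s, (f s : ℝ) / 2 ^ s ≤ α :=
  (monotone_nat_of_le_succ hmono).ge_of_tendsto htend

lemma approx_exceed (htend : Tendsto (fun s => (f s : ℝ) / 2 ^ s) atTop (nhds α))
    {q : ℝ} (hq : q < α) : ∃ s, q < (f s : ℝ) / 2 ^ s :=
  (htend.eventually (eventually_gt_nhds hq)).exists

def G (f : ℕ → ℤ) (s : ℕ) : ℕ := squash (Encodable.encode (f s))

lemma G_cast (s : ℕ) : ((G f s : ℤ)) = max (f s) 0 := squash_encode _

lemma bridge (n k s : ℕ) :
    (k + 1) * 2 ^ s < 2 ^ n * G f s ↔ ((k : ℝ) + 1) / 2 ^ n < (f s : ℝ) / 2 ^ s := by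
  have h2n : (0:ℝ) < 2 ^ n := by positivity
  have h2s : (0:ℝ) < 2 ^ s := by positivity
  have hmax := G_cast (f := f) s
  constructor
  · intro h
    have hG : 0 < G f s := by
      rcases Nat.eq_zero_or_pos (G f s) with h0 | h0
      · rw [h0, mul_zero] at h; omega
      · exact h0
    have hfs : (G f s : ℤ) = f s := by
      rcases max_cases (f s) 0 with ⟨h1, _⟩ | ⟨h1, _⟩ <;> rw [h1] at hmax <;> omega
    have hGr : (G f s : ℝ) = (f s : ℝ) := by exact_mod_cast hfs
    have hr : (((k + 1) * 2 ^ s : ℕ) : ℝ) < ((2 ^ n * G f s : ℕ) : ℝ) := by exact_mod_cast h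
    push_cast at hr
    rw [hGr] at hr
    rw [div_lt_div_iff₀ h2n h2s]
    linarith
  · intro h
    rw [div_lt_div_iff₀ h2n h2s] at h
    have hf0 : (0:ℝ) < (f s : ℝ) := by nlinarith
    have hf0' : 0 < f s := by exact_mod_cast hf0
    have hfs : (G f s : ℤ) = f s := by
      rcases max_cases (f s) 0 with ⟨h1, _⟩ | ⟨h1, h2⟩ <;> rw [h1] at hmax
      · omega
      · omega
    have hGr : (G f s : ℝ) = (f s : ℝ) := by exact_mod_cast hfs
    have : (((k + 1) * 2 ^ s : ℕ) : ℝ) < ((2 ^ n * G f s : ℕ) : ℝ) := by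
      push_cast
      rw [hGr]
      linarith
    exact_mod_cast this

end approx

/-! #### Concrete computable translation functions -/

lemma primrec_val : Primrec val := by
  have h : Primrec₂ (fun (_ : Str) (p : ℕ × Bool) => 2 * p.1 + cond p.2 1 0) :=
    (Primrec.nat_add.comp
      (Primrec.nat_mul.comp (Primrec.const 2) (Primrec.fst.comp Primrec.snd))
      (Primrec.cond (Primrec.snd.comp Primrec.snd) (Primrec.const 1) (Primrec.const 0))).to₂
  exact (Primrec.list_foldl Primrec.id (Primrec.const 0) h).of_eq fun τ => rfl

lemma primrec_pow2 : Primrec (fun n : ℕ => 2 ^ n) :=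
  (Primrec₂.unpaired'.mp Nat.Primrec.pow).comp (Primrec.const 2) Primrec.id

def NN (n : ℕ) : ℕ := Nat.pair n (2 ^ n)

lemma primrec_NN : Primrec NN := Primrec₂.natPair.comp Primrec.id primrec_pow2

def g1 (σ : Str) : Str :=
  (List.range σ.length).map fun j =>
    decide (j.unpair.2 < val ((List.range j.unpair.1).map fun i => σ.getD i false))

lemma primrec_g1 : Primrec g1 := by
  have hup : Primrec (fun p : Str × ℕ => p.2.unpair) :=
    Primrec.unpair.comp Primrec.snd
  have hinner : Primrec (fun p : Str × ℕ =>
      (List.range p.2.unpair.1).map fun i => p.1.getD i false) :=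
    Primrec.list_map (Primrec.list_range.comp (Primrec.fst.comp hup))
      ((Primrec₂.comp (Primrec.list_getD false) (Primrec.fst.comp Primrec.fst)
        Primrec.snd).to₂)
  have hdec : Primrec (fun p : Str × ℕ =>
      decide (p.2.unpair.2 < val ((List.range p.2.unpair.1).map fun i => p.1.getD i false))) :=
    Primrec₂.comp Primrec.nat_lt.decide (Primrec.snd.comp hup) (primrec_val.comp hinner)
  exact Primrec.list_map (Primrec.list_range.comp Primrec.list_length) hdec.to₂

def cnt (σ : Str) (m : ℕ) : ℕ :=
  ((List.range (2 ^ m)).map fun k => cond (σ.getD (Nat.pair m k) false) 1 0).foldl (· + ·) 0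

lemma primrec_cnt : Primrec₂ cnt := by
  have hlist : Primrec (fun p : Str × ℕ =>
      (List.range (2 ^ p.2)).map fun k => cond (p.1.getD (Nat.pair p.2 k) false) 1 0) :=
    Primrec.list_map (Primrec.list_range.comp (primrec_pow2.comp Primrec.snd))
      ((Primrec.cond
        (Primrec₂.comp (Primrec.list_getD false) (Primrec.fst.comp Primrec.fst)
          (Primrec₂.natPair.comp (Primrec.snd.comp Primrec.fst) Primrec.snd))
        (Primrec.const 1) (Primrec.const 0)).to₂)
  have hfold : Primrec₂ (fun (_ : Str × ℕ) (p : ℕ × ℕ) => p.1 + p.2) :=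
    (Primrec.nat_add.comp (Primrec.fst.comp Primrec.snd)
      (Primrec.snd.comp Primrec.snd)).to₂
  exact (Primrec.list_foldl hlist (Primrec.const 0) hfold).of_eq fun p => rfl

def g2 (σ : Str) : Str :=
  if NN (Nat.unpair σ.length).1 = σ.length then
    (List.range (Nat.unpair σ.length).1).map fun i => decide (cnt σ (i + 1) % 2 = 1)
  else []

lemma primrec_g2 : Primrec g2 := by
  have hn : Primrec (fun σ : Str => (Nat.unpair σ.length).1) :=
    Primrec.fst.comp (Primrec.unpair.comp Primrec.list_length)
  have hcond : PrimrecPred (fun σ : Str => NN (Nat.unpair σ.length).1 = σ.length) :=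
    Primrec.eq.comp (primrec_NN.comp hn) Primrec.list_length
  have hbit : Primrec₂ (fun (σ : Str) (i : ℕ) => decide (cnt σ (i + 1) % 2 = 1)) :=
    (Primrec₂.comp Primrec.eq.decide
      (Primrec.nat_mod.comp
        (Primrec₂.comp primrec_cnt Primrec.fst (Primrec.succ.comp Primrec.snd))
        (Primrec.const 2))
      (Primrec.const 1)).to₂
  exact Primrec.ite hcond
    (Primrec.list_map (Primrec.list_range.comp hn) hbit) (Primrec.const [])

def g3 (σ : Str) : Str := (List.range (NN σ.length)).map fun _ => false

lemma primrec_g3 : Primrec g3 :=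
  Primrec.list_map (Primrec.list_range.comp (primrec_NN.comp Primrec.list_length))
    (Primrec.const false).to₂

def g4 (L : Str) (σ : Str) : Str := (List.range σ.length).map fun i => L.getD i false

lemma primrec_g4 (L : Str) : Primrec (g4 L) :=
  Primrec.list_map (Primrec.list_range.comp Primrec.list_length)
    ((Primrec₂.comp (Primrec.list_getD false) (Primrec.const L) Primrec.snd).to₂)

/-! #### The c.e. set `B` -/

lemma ce_B {f : ℕ → ℤ} (hf : Computable f) :
    CESet {j : ℕ | ∃ s, (j.unpair.2 + 1) * 2 ^ s < 2 ^ j.unpair.1 * G f s} := by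
  have cG : Computable (G f) := primrec_squash.to_comp.comp (Computable.encode.comp hf)
  have clhs : Computable (fun p : ℕ × ℕ => (p.1.unpair.2 + 1) * 2 ^ p.2) :=
    Primrec.to_comp
      (Primrec.nat_mul.comp
        (Primrec.succ.comp (Primrec.snd.comp (Primrec.unpair.comp Primrec.fst)))
        (primrec_pow2.comp Primrec.snd))
  have crhs : Computable (fun p : ℕ × ℕ => 2 ^ p.1.unpair.1 * G f p.2) :=
    Primrec₂.to_comp Primrec.nat_mul
      |>.comp (Primrec.to_comp
        (primrec_pow2.comp (Primrec.fst.comp (Primrec.unpair.comp Primrec.fst))))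
        (cG.comp Computable.snd)
  have cdec : Computable (fun p : ℕ × ℕ =>
      decide ((p.1.unpair.2 + 1) * 2 ^ p.2 < 2 ^ p.1.unpair.1 * G f p.2)) :=
    (Primrec₂.to_comp Primrec.nat_lt.decide).comp clhs crhs
  have hp : Partrec₂ (fun (j s : ℕ) => (Part.some (decide
      ((j.unpair.2 + 1) * 2 ^ s < 2 ^ j.unpair.1 * G f s)) : Part Bool)) :=
    Computable₂.partrec₂ cdec.to₂
  refine ⟨fun j => Nat.rfind fun s => Part.some (decide
      ((j.unpair.2 + 1) * 2 ^ s < 2 ^ j.unpair.1 * G f s)),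
    Partrec.nat_iff.1 (Partrec.rfind hp), fun j => ?_⟩
  rw [Set.mem_setOf_eq]
  refine Iff.trans ?_ Nat.rfind_dom.symm
  simp only [Part.mem_some_iff, Part.some_dom, and_true, eq_comm (a := true),
    decide_eq_true_eq]
  constructor
  · rintro ⟨s, hs⟩; exact ⟨s, hs, fun _ => trivial⟩
  · rintro ⟨s, hs, -⟩; exact ⟨s, hs⟩

/-! #### Correctness of the translation functions -/

@[simp] lemma restrSet_length (B : Set ℕ) (n : ℕ) : (restrSet B n).length = n := by
  simp [restrSet]

lemma restrSet_eq_restrSeq (B : Set ℕ) (n : ℕ) :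
    restrSet B n = restrSeq (fun j => decide (j ∈ B)) n := rfl

lemma g1_corr (A : ℕ → Bool) (B : Set ℕ)
    (hch : ∀ j, j ∈ B ↔ j.unpair.2 < val (restrSeq A j.unpair.1)) (n : ℕ) :
    g1 (restrSeq A n) = restrSet B n := by
  rw [restrSet_eq_restrSeq, g1, restrSeq_length, restrSeq]
  apply List.map_congr_left
  intro j hj
  rw [List.mem_range] at hj
  have h2 : ((List.range j.unpair.1).map fun i => (List.map A (List.range n)).getD i false)
      = restrSeq A j.unpair.1 := by
    rw [restrSeq]
    apply List.map_congr_left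
    intro i hi
    exact restrSeq_getD A
      (lt_of_lt_of_le (List.mem_range.mp hi) ((Nat.unpair_left_le j).trans hj.le))
  rw [h2]
  exact (decide_eq_decide.mpr (hch j)).symm

lemma g2_corr (A : ℕ → Bool) (B : Set ℕ)
    (hch : ∀ j, j ∈ B ↔ j.unpair.2 < val (restrSeq A j.unpair.1)) (n : ℕ) :
    g2 (restrSet B (NN n)) = restrSeq A n := by
  have hlen : (restrSet B (NN n)).length = NN n := restrSet_length B (NN n)
  have hup : (Nat.unpair (NN n)).1 = n := by rw [NN, Nat.unpair_pair]
  rw [g2, hlen, hup, if_pos rfl, restrSeq]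
  apply List.map_congr_left
  intro i hi
  rw [List.mem_range] at hi
  have hcnt : cnt (restrSet B (NN n)) (i + 1) = val (restrSeq A (i + 1)) := by
    rw [cnt]
    have hmapeq : ∀ k ∈ List.range (2 ^ (i + 1)),
        (cond ((restrSet B (NN n)).getD (Nat.pair (i + 1) k) false) 1 0 : ℕ)
          = cond (decide (k < val (restrSeq A (i + 1)))) 1 0 := by
      intro k hk
      rw [List.mem_range] at hk
      have hlt : Nat.pair (i + 1) k < NN n := by
        calc Nat.pair (i + 1) k ≤ Nat.pair n k := pair_le_pair_left k (by omega)
          _ < Nat.pair n (2 ^ n) := Nat.pair_lt_pair_right n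
              (lt_of_lt_of_le hk (Nat.pow_le_pow_right (by norm_num) (by omega)))
      have hgd : (restrSet B (NN n)).getD (Nat.pair (i + 1) k) false
          = decide (Nat.pair (i + 1) k ∈ B) := by
        rw [restrSet_eq_restrSeq]
        exact restrSeq_getD _ hlt
      rw [hgd]
      congr 1
      apply decide_eq_decide.mpr
      rw [hch (Nat.pair (i + 1) k), Nat.unpair_pair]
    rw [List.map_congr_left hmapeq, count_lt]
    exact min_eq_left (by simpa using (val_lt (restrSeq A (i + 1))).le)
  rw [hcnt, val_restrSeq_succ]
  cases hAi : A i
  · have h2 : (2 * val (restrSeq A i) + cond false 1 0) % 2 = 0 := by simp [Nat.mul_add_mod]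
    simp only [h2]
    simp
  · have h2 : (2 * val (restrSeq A i) + cond true 1 0) % 2 = 1 := by simp [Nat.mul_add_mod]
    simp only [h2]
    simp

lemma g3_corr (n : ℕ) : g3 (zeroStr n) = zeroStr (NN n) := by
  rw [g3, zeroStr, zeroStr, List.length_replicate]
  rw [List.map_const']
  simp

lemma g4_corr (A : ℕ → Bool) (m : ℕ) (hm : ∀ i, m ≤ i → A i = false) (n : ℕ) :
    g4 (restrSeq A m) (zeroStr n) = restrSeq A n := by
  rw [g4, zeroStr, List.length_replicate, restrSeq]
  apply List.map_congr_left
  intro i _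
  by_cases him : i < m
  · exact restrSeq_getD A him
  · rw [List.getD_eq_default, hm i (by omega)]
    simpa using (by omega : m ≤ i)

end Stmt3Aux

/-- If `A` is a c.e. real which is not `K`-trivial, then there is a
c.e. set `B` which is not `K`-trivial and satisfies `B ≤_K A`. -/
theorem stmt3 (U : Str →. Str) (hU : OptimalPF U)
    (A : ℕ → Bool) (hA : CEReal A) (hAnt : ¬ KTrivialSeq U A) :
    ∃ B : Set ℕ, CESet B ∧ ¬ KTrivialSet U B ∧
      ∃ c : ℕ, ∀ n, KC U (restrSet B n) ≤ KC U (restrSeq A n) + c := by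
  obtain ⟨f, hf, hmono, htend⟩ := hA
  by_cases hfin : ∃ m, ∀ i, m ≤ i → A i = false
  · exfalso
    obtain ⟨m, hm⟩ := hfin
    obtain ⟨c4, hc4⟩ := kc_push hU (primrec_g4 (restrSeq A m)).to_comp
    refine hAnt ⟨c4, fun n => ?_⟩
    rw [← g4_corr A m hm n]
    exact hc4 _
  · push_neg at hfin
    have hinf : ∀ m : ℕ, ∃ i, m ≤ i ∧ A i = true := by
      intro m
      obtain ⟨i, h1, h2⟩ := hfin m
      exact ⟨i, h1, by simpa using h2⟩
    set B' : Set ℕ :=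
      {j : ℕ | ∃ s, (j.unpair.2 + 1) * 2 ^ s < 2 ^ j.unpair.1 * G f s} with hB'
    have charB : ∀ j, j ∈ B' ↔ j.unpair.2 < val (restrSeq A j.unpair.1) := by
      intro j
      rw [hB', Set.mem_setOf_eq]
      set n := j.unpair.1 with hn
      set k := j.unpair.2 with hk
      have h2n : (0:ℝ) < 2 ^ n := by positivity
      constructor
      · rintro ⟨s, hs⟩
        rw [bridge] at hs
        have h1 := approx_le_lim hmono htend s
        have hsplit := realOfSeq_split A n
        have htl := tail_le A n
        have hlt : ((k:ℝ) + 1) / 2 ^ n < ((val (restrSeq A n) : ℝ) + 1) / 2 ^ n := by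
          have hub : realOfSeq A ≤ ((val (restrSeq A n) : ℝ) + 1) / 2 ^ n := by
            rw [hsplit, add_div]
            have hd : (1:ℝ) / 2 ^ n = ((2:ℝ) ^ n)⁻¹ := one_div _
            linarith
          linarith
        rw [div_lt_div_iff₀ h2n h2n] at hlt
        have hfin2 : ((k:ℝ)) < (val (restrSeq A n) : ℝ) := by
          have := lt_of_mul_lt_mul_right hlt h2n.le
          linarith
        exact_mod_cast hfin2
      · intro hk2
        have hsplit := realOfSeq_split A n
        have htp := tail_pos A n (hinf n)
        have hq : ((k:ℝ) + 1) / 2 ^ n < realOfSeq A := by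
          have hle : ((k:ℝ) + 1) ≤ (val (restrSeq A n) : ℝ) := by exact_mod_cast hk2
          have hdiv : ((k:ℝ) + 1) / 2 ^ n ≤ (val (restrSeq A n) : ℝ) / 2 ^ n := by gcongr
          rw [hsplit]
          linarith
        obtain ⟨s, hs⟩ := approx_exceed htend hq
        exact ⟨s, (bridge n k s).mpr hs⟩
    refine ⟨B', ce_B hf, ?_, ?_⟩
    · rintro ⟨cB, hcB⟩
      obtain ⟨c2, hc2⟩ := kc_push hU primrec_g2.to_comp
      obtain ⟨c3, hc3⟩ := kc_push hU primrec_g3.to_comp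
      refine hAnt ⟨c3 + cB + c2, fun n => ?_⟩
      calc KC U (restrSeq A n) = KC U (g2 (restrSet B' (NN n))) := by
            rw [g2_corr A B' charB n]
        _ ≤ KC U (restrSet B' (NN n)) + c2 := hc2 _
        _ ≤ (KC U (zeroStr (NN n)) + cB) + c2 := add_le_add_left (hcB (NN n)) _
        _ = (KC U (g3 (zeroStr n)) + cB) + c2 := by rw [g3_corr n]
        _ ≤ ((KC U (zeroStr n) + c3) + cB) + c2 :=
            add_le_add_left (add_le_add_left (hc3 _) _) _
        _ = KC U (zeroStr n) + ((c3 + cB + c2 : ℕ) : ℕ∞) := by push_cast; ring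
    · obtain ⟨c1, hc1⟩ := kc_push hU primrec_g1.to_comp
      refine ⟨c1, fun n => ?_⟩
      rw [← g1_corr A B' charB n]
      exact hc1 _


end KPaper
end

section
/- For every computably enumerable real A there exists a computably enumerable set B such that A and B are Turing equivalent and there is a constant c with K(B↾n) ≤ K(A↾n) + c for all n. Moreover B can be chosen so that B is computable from A via a Turing reduction in which the computation of the first n bits of B queries only the first n bits of A. -/
open Part Filter

open scoped Classical

namespace KPaper

/-! ### Auxiliary development for Statement 4 -/

namespace S4


def valStr (σ : Str) : ℕ := σ.foldl (fun a b => 2 * a + cond b 1 0) 0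

lemma valStr_append (σ : Str) (b : Bool) : valStr (σ ++ [b]) = 2 * valStr σ + cond b 1 0 := by
  simp [valStr, List.foldl_append]

lemma restrSeq_succ (X : ℕ → Bool) (n : ℕ) : restrSeq X (n+1) = restrSeq X n ++ [X n] := by
  simp [restrSeq, List.range_succ]

def v (X : ℕ → Bool) (m : ℕ) : ℕ := valStr (restrSeq X m)

lemma v_succ (X : ℕ → Bool) (m : ℕ) : v X (m+1) = 2 * v X m + cond (X m) 1 0 := by
  rw [v, restrSeq_succ, valStr_append]; rfl

lemma v_lt (X : ℕ → Bool) (m : ℕ) : v X m < 2 ^ m := by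
  induction m with
  | zero => simp [v, restrSeq, valStr]
  | succ m ih => rw [v_succ, pow_succ]; cases X m <;> simp <;> omega

lemma summable_geo1 : Summable (fun i : ℕ => ((2:ℝ)^(i+1))⁻¹) := by
  refine (summable_geometric_two.mul_left (1/2 : ℝ)).congr fun i => ?_
  rw [pow_succ]
  simp [mul_comm]

lemma summable_base (X : ℕ → Bool) : Summable (fun i => cond (X i) (((2:ℝ)^(i+1))⁻¹) 0) := by
  refine Summable.of_nonneg_of_le (fun i => ?_) (fun i => ?_) summable_geo1
  · cases X i <;> simp
  · cases X i <;> simp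

lemma sum_eq (X : ℕ → Bool) (n : ℕ) :
    ∑ i ∈ Finset.range n, cond (X i) (((2:ℝ)^(i+1))⁻¹) 0 = (v X n : ℝ) / 2^n := by
  induction n with
  | zero => simp [v, restrSeq, valStr]
  | succ n ih =>
    rw [Finset.sum_range_succ, ih, v_succ]
    cases X n <;> push_cast <;> simp <;> rw [pow_succ] <;> field_simp <;> ring

lemma W1 (X : ℕ → Bool) (n : ℕ) : (v X n : ℝ)/2^n ≤ realOfSeq X := by
  rw [← sum_eq]
  refine Summable.sum_le_tsum (Finset.range n) (fun i _ => ?_) (summable_base X)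
  cases X i <;> simp

lemma tsum_shift (n : ℕ) : ∑' i : ℕ, ((2:ℝ)^(i+n+1))⁻¹ = ((2:ℝ)^n)⁻¹ := by
  have h1 : ∀ i : ℕ, ((2:ℝ)^(i+n+1))⁻¹ = ((2:ℝ)^n)⁻¹ * ((2:ℝ)^(i+1))⁻¹ := by
    intro i
    rw [← mul_inv, ← pow_add]
    ring_nf
  rw [tsum_congr h1, tsum_mul_left]
  have h2 : ∑' i : ℕ, ((2:ℝ)^(i+1))⁻¹ = 1 := by
    have h3 := tsum_geometric_two' 1
    rw [← h3]
    refine tsum_congr fun i => ?_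
    rw [pow_succ]
    rw [one_div, mul_inv, eq_comm, div_eq_iff (by positivity)]
    field_simp
  rw [h2, mul_one]

lemma W2 (X : ℕ → Bool) (n : ℕ) : realOfSeq X ≤ ((v X n : ℝ) + 1)/2^n := by
  have hsum := summable_base X
  have hsplit := Summable.sum_add_tsum_nat_add n hsum
  have htail : ∑' i : ℕ, cond (X (i+n)) (((2:ℝ)^(i+n+1))⁻¹) 0 ≤ ((2:ℝ)^n)⁻¹ := by
    rw [← tsum_shift n]
    have hs1 : Summable (fun i => cond (X (i+n)) (((2:ℝ)^(i+n+1))⁻¹) 0) :=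
      (summable_nat_add_iff (f := fun i => cond (X i) (((2:ℝ)^(i+1))⁻¹) 0) n).2 hsum
    have hs2 : Summable (fun i : ℕ => ((2:ℝ)^(i+n+1))⁻¹) :=
      (summable_nat_add_iff (f := fun i : ℕ => ((2:ℝ)^(i+1))⁻¹) n).2 summable_geo1
    refine Summable.tsum_le_tsum (fun i => ?_) hs1 hs2
    cases X (i+n) <;> simp
  have : realOfSeq X = (v X n : ℝ)/2^n + ∑' i : ℕ, cond (X (i+n)) (((2:ℝ)^(i+n+1))⁻¹) 0 := by
    rw [realOfSeq, ← hsplit, sum_eq]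
  rw [this, add_div]
  have h2 : (1:ℝ)/2^n = ((2:ℝ)^n)⁻¹ := one_div _
  linarith [htail]

lemma step_low (X : ℕ → Bool) (n : ℕ) : (v X n : ℝ)/2^n ≤ (v X (n+1) : ℝ)/2^(n+1) := by
  rw [v_succ]
  rw [div_le_div_iff₀ (by positivity) (by positivity), pow_succ]
  push_cast
  cases X n <;> simp <;> nlinarith [pow_pos (by norm_num : (0:ℝ) < 2) n]

lemma step_high (X : ℕ → Bool) (n : ℕ) : ((v X (n+1) : ℝ)+1)/2^(n+1) ≤ ((v X n : ℝ)+1)/2^n := by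
  rw [v_succ]
  rw [div_le_div_iff₀ (by positivity) (by positivity), pow_succ]
  push_cast
  cases X n <;> simp <;> nlinarith [pow_pos (by norm_num : (0:ℝ) < 2) n]

lemma mono_low (X : ℕ → Bool) : Monotone (fun n => (v X n : ℝ)/2^n) :=
  monotone_nat_of_le_succ (step_low X)

lemma anti_high (X : ℕ → Bool) : Antitone (fun n => ((v X n : ℝ)+1)/2^n) :=
  antitone_nat_of_succ_le (step_high X)

/-- strict lower bound when there is a later `true` bit -/
lemma lt_alpha (X : ℕ → Bool) (m : ℕ) (h : ∃ i, m ≤ i ∧ X i = true) :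
    (v X m : ℝ)/2^m < realOfSeq X := by
  obtain ⟨i, him, hXi⟩ := h
  have h1 : (v X m : ℝ)/2^m ≤ (v X i : ℝ)/2^i := mono_low X him
  have h2 : (v X i : ℝ)/2^i < (v X (i+1) : ℝ)/2^(i+1) := by
    rw [v_succ, hXi]
    rw [div_lt_div_iff₀ (by positivity) (by positivity), pow_succ]
    push_cast
    simp only [Bool.cond_true, Bool.cond_false]
    push_cast
    nlinarith [pow_pos (by norm_num : (0:ℝ) < 2) i]
  exact lt_of_le_of_lt h1 (lt_of_lt_of_le h2 (W1 X (i+1)))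

/-- strict upper bound when there is a later `false` bit -/
lemma alpha_lt (X : ℕ → Bool) (m : ℕ) (h : ∃ i, m ≤ i ∧ X i = false) :
    realOfSeq X < ((v X m : ℝ)+1)/2^m := by
  obtain ⟨i, him, hXi⟩ := h
  have h2 : ((v X (i+1) : ℝ)+1)/2^(i+1) < ((v X i : ℝ)+1)/2^i := by
    rw [v_succ, hXi]
    rw [div_lt_div_iff₀ (by positivity) (by positivity), pow_succ]
    push_cast
    simp only [Bool.cond_true, Bool.cond_false]
    push_cast
    nlinarith [pow_pos (by norm_num : (0:ℝ) < 2) i]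
  have h1 : ((v X i : ℝ)+1)/2^i ≤ ((v X m : ℝ)+1)/2^m := anti_high X him
  exact lt_of_le_of_lt (W2 X (i+1)) (lt_of_lt_of_le h2 h1)

section Claim1

variable {X : ℕ → Bool} {f : ℕ → ℤ}
variable (hmono : ∀ s, (f s : ℝ) / 2 ^ s ≤ (f (s + 1) : ℝ) / 2 ^ (s + 1))
variable (hlim : Tendsto (fun s => (f s : ℝ) / 2 ^ s) atTop (nhds (realOfSeq X)))
variable (hT : ∀ N, ∃ i, N ≤ i ∧ X i = true)
variable (hF : ∀ N, ∃ i, N ≤ i ∧ X i = false)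

include hmono hlim in
lemma approx_le (s : ℕ) : (f s : ℝ) / 2 ^ s ≤ realOfSeq X :=
  (monotone_nat_of_le_succ hmono).ge_of_tendsto hlim s

include hmono hlim hT hF in
lemma claim1 (m k : ℕ) : (∃ s : ℕ, (k : ℤ) * 2^s ≤ f s * 2^m) ↔ k ≤ v X m := by
  constructor
  · rintro ⟨s, hs⟩
    have hs' : (k : ℝ) * 2^s ≤ (f s : ℝ) * 2^m := by
      exact_mod_cast hs
    have hks : (k : ℝ)/2^m ≤ (f s : ℝ)/2^s := by
      rw [div_le_div_iff₀ (by positivity) (by positivity)]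
      linarith
    have h2 : (k : ℝ)/2^m < ((v X m : ℝ)+1)/2^m :=
      lt_of_le_of_lt (le_trans hks (approx_le hmono hlim s)) (alpha_lt X m (hF m))
    have : (k : ℝ) < (v X m : ℝ) + 1 := by
      rw [div_lt_div_iff₀ (by positivity) (by positivity)] at h2
      nlinarith [pow_pos (by norm_num : (0:ℝ) < 2) m]
    exact_mod_cast Nat.lt_succ_iff.1 (by exact_mod_cast this)
  · intro hk
    have h1 : (k : ℝ)/2^m < realOfSeq X :=
      lt_of_le_of_lt (by
        apply div_le_div_of_nonneg_right ?_ (by positivity)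
        · exact_mod_cast hk
        ) (lt_alpha X m (hT m))
    obtain ⟨s, hs⟩ := (hlim.eventually (eventually_gt_nhds h1)).exists
    refine ⟨s, ?_⟩
    have : (k : ℝ) * 2^s ≤ (f s : ℝ) * 2^m := by
      rw [div_lt_div_iff₀ (by positivity) (by positivity)] at hs
      linarith
    have h3 : ((k * 2^s : ℤ) : ℝ) ≤ ((f s * 2^m : ℤ) : ℝ) := by push_cast; linarith
    exact_mod_cast h3

end Claim1


/-! #### Relativized computability helpers -/

theorem recIn_of_natPartrec {O : ℕ →. ℕ} {f : ℕ →. ℕ} (hf : Nat.Partrec f) :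
    RecursiveIn O f := by
  induction hf with
  | zero => exact .zero
  | succ => exact .succ
  | left => exact .left
  | right => exact .right
  | pair _ _ ih₁ ih₂ => exact .pair ih₁ ih₂
  | comp _ _ ih₁ ih₂ => exact .comp ih₁ ih₂
  | prec _ _ ih₁ ih₂ => exact .prec ih₁ ih₂
  | rfind _ ih => exact .rfind ih

theorem recIn_of_eq {O f g : ℕ →. ℕ} (h : RecursiveIn O f) (H : ∀ n, f n = g n) :
    RecursiveIn O g := (funext H : f = g) ▸ h

theorem recIn_of_computable {O : ℕ →. ℕ} {g : ℕ → ℕ} (hg : Computable g) :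
    RecursiveIn O (fun n => Part.some (g n)) :=
  recIn_of_natPartrec (Partrec.nat_iff.1 hg.partrec)

theorem recIn_map {O : ℕ →. ℕ} {h : ℕ →. ℕ} (hh : RecursiveIn O h)
    {F : ℕ → ℕ → ℕ} (hF : Computable₂ F) :
    RecursiveIn O (fun n => (h n).map (F n)) := by
  have hid : RecursiveIn O (fun n => Part.some n) := recIn_of_computable Computable.id
  have hp : RecursiveIn O (fun n => Nat.pair <$> (fun m => Part.some m) n <*> h n) :=
    RecursiveIn.pair hid hh
  have hcu : Computable (Nat.unpaired F) :=
    (hF.comp (Computable.fst.comp Computable.unpair)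
      (Computable.snd.comp Computable.unpair)).of_eq fun n => rfl
  have hu : RecursiveIn O (fun x => Part.some (Nat.unpaired F x)) := recIn_of_computable hcu
  have hc := RecursiveIn.comp hu hp
  refine recIn_of_eq hc fun n => ?_
  apply Part.ext
  intro r
  simp only [Seq.seq, Nat.unpaired, Part.mem_bind_iff, Part.mem_map_iff, Part.mem_some_iff,
    Part.bind_eq_bind, Part.map_eq_map]
  constructor
  · rintro ⟨a, ⟨g, ⟨⟨x, rfl, rfl⟩, ⟨b, hb, rfl⟩⟩⟩, rfl⟩
    exact ⟨b, hb, by simp⟩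
  · rintro ⟨b, hb, rfl⟩
    exact ⟨Nat.pair n b, ⟨Nat.pair n, ⟨n, rfl, rfl⟩, b, hb, rfl⟩, by simp⟩

theorem recIn_oracle_comp {O : ℕ →. ℕ} {g : ℕ → ℕ} (hg : Computable g) :
    RecursiveIn O (fun n => O (g n)) :=
  recIn_of_eq (RecursiveIn.comp .oracle (recIn_of_computable hg)) fun n =>
    Part.bind_some (g n) O

theorem recIn_comp_computable {O : ℕ →. ℕ} {h : ℕ →. ℕ} (hh : RecursiveIn O h)
    {g : ℕ → ℕ} (hg : Computable g) :
    RecursiveIn O (fun n => h (g n)) :=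
  recIn_of_eq (RecursiveIn.comp hh (recIn_of_computable hg)) fun n =>
    Part.bind_some (g n) h

/-! #### Division form of initial-segment values -/

lemma v_div (X : ℕ → Bool) : ∀ {m n : ℕ}, m ≤ n → v X n / 2^(n-m) = v X m := by
  intro m n h
  induction n with
  | zero =>
    have : m = 0 := Nat.le_zero.1 h
    subst this
    simp [v, restrSeq, valStr]
  | succ n ih =>
    rcases Nat.eq_or_lt_of_le h with rfl | h'
    · simp
    · have hmn : m ≤ n := Nat.lt_succ_iff.1 h'
      have h1 : n + 1 - m = (n - m) + 1 := by omega
      rw [h1, pow_succ, mul_comm, ← Nat.div_div_eq_div_mul, v_succ]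
      have hstep : (2 * v X n + cond (X n) 1 0) / 2 = v X n := by
        cases X n <;> simp <;> omega
      rw [hstep]
      exact ih hmn

/-! #### The c.e. set -/

theorem cese {f : ℕ → ℤ} (hf : Computable f) :
    CESet {n : ℕ | ∃ s : ℕ, (n.unpair.2 : ℤ) * 2^s ≤ f s * 2^(n.unpair.1)} := by
  have hencode : ∀ z : ℤ, Encodable.encode z =
      if 0 ≤ z then 2 * z.toNat else 2 * (-z-1).toNat + 1 := by
    rintro (n | n)
    · simp [Encodable.encode]; rfl
    · simp [Encodable.encode]; rfl
  set bval : ℕ → ℕ → Bool := fun n s =>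
    decide (Encodable.encode (f s) % 2 = 0 ∧
      n.unpair.2 * 2^s ≤ Encodable.encode (f s) / 2 * 2^(n.unpair.1)) with hbvaldef
  have hbv : ∀ n s, bval n s = true ↔ ((n.unpair.2 : ℤ) * 2^s ≤ f s * 2^(n.unpair.1)) := by
    intro n s
    rw [hbvaldef]
    simp only [decide_eq_true_eq]
    rcases le_or_gt 0 (f s) with hz | hz
    · have ht : (f s) = ((f s).toNat : ℤ) := (Int.toNat_of_nonneg hz).symm
      rw [hencode (f s), if_pos hz]
      have h2 : 2 * (f s).toNat / 2 = (f s).toNat := by omega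
      have h3 : 2 * (f s).toNat % 2 = 0 := by omega
      rw [h2, h3]
      simp only [true_and]
      rw [ht]
      constructor
      · intro h; exact_mod_cast h
      · intro h; exact_mod_cast h
    · rw [hencode (f s), if_neg (not_le.2 hz)]
      constructor
      · rintro ⟨hmod, -⟩; omega
      · intro h
        exfalso
        have hneg : f s * 2^(n.unpair.1) < 0 :=
          mul_neg_of_neg_of_pos hz (by positivity)
        have hpos : (0:ℤ) ≤ (n.unpair.2 : ℤ) * 2^s := by positivity
        linarith
  -- computability of bval
  have u1 : Primrec (fun t : ℕ => t.unpair.1) := Primrec.fst.comp Primrec.unpair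
  have u2 : Primrec (fun t : ℕ => t.unpair.2) := Primrec.snd.comp Primrec.unpair
  have npow : Primrec₂ ((· ^ ·) : ℕ → ℕ → ℕ) := Primrec₂.unpaired'.1 Nat.Primrec.pow
  have hbvalN : Primrec (fun t : ℕ =>
      decide (t.unpair.2 % 2 = 0 ∧
        t.unpair.1.unpair.1.unpair.2 * 2 ^ (t.unpair.1.unpair.2) ≤
          t.unpair.2 / 2 * 2 ^ (t.unpair.1.unpair.1.unpair.1))) := by
    have p1 : PrimrecPred (fun t : ℕ => t.unpair.2 % 2 = 0) :=
      PrimrecRel.comp Primrec.eq (Primrec.nat_mod.comp u2 (Primrec.const 2)) (Primrec.const 0)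
    have p2 : PrimrecPred (fun t : ℕ =>
        t.unpair.1.unpair.1.unpair.2 * 2 ^ (t.unpair.1.unpair.2) ≤
          t.unpair.2 / 2 * 2 ^ (t.unpair.1.unpair.1.unpair.1)) :=
      PrimrecRel.comp Primrec.nat_le
        (Primrec.nat_mul.comp (u2.comp (u1.comp u1))
          (npow.comp (Primrec.const 2) (u2.comp u1)))
        (Primrec.nat_mul.comp (Primrec.nat_div.comp u2 (Primrec.const 2))
          (npow.comp (Primrec.const 2) (u1.comp (u1.comp u1))))
    exact (p1.and p2).decide
  have hpairc : Computable (fun p : ℕ × ℕ =>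
      Nat.pair (Nat.pair p.1 p.2) (Encodable.encode (f p.2))) :=
    Primrec₂.natPair.to_comp.comp
      (Primrec₂.natPair.to_comp.comp Computable.fst Computable.snd)
      (Computable.encode.comp (hf.comp Computable.snd))
  have hbvc : Computable₂ bval :=
    (hbvalN.to_comp.comp hpairc).of_eq fun p => by
      simp only [Nat.unpair_pair, hbvaldef]
  have hfB : Partrec (fun n => Nat.rfind (fun s => (Part.some (bval n s) : Part Bool))) :=
    Partrec.rfind hbvc.partrec₂
  refine ⟨_, Partrec.nat_iff.1 hfB, fun n => ?_⟩
  refine Iff.trans ?_ Nat.rfind_dom.symm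
  constructor
  · rintro ⟨s, hs⟩
    exact ⟨s, Part.mem_some_iff.2 ((hbv n s).2 hs).symm, fun {m} _ => trivial⟩
  · rintro ⟨s, hs, -⟩
    exact ⟨s, (hbv n s).1 (Part.mem_some_iff.1 hs).symm⟩

/-! #### Turing reductions -/

theorem turing1 {A : ℕ → Bool} {B : Set ℕ}
    (hmem : ∀ n : ℕ, n ∈ B ↔ n.unpair.2 ≤ v A n.unpair.1) :
    RecursiveIn (chiSeq A) (chi B) := by
  set O := chiSeq A with hO
  set gV : ℕ →. ℕ :=
    fun x => (O x.unpair.2.unpair.1).map (fun b => b + 2 * x.unpair.2.unpair.2) with hgVdef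
  have hgV : RecursiveIn O gV := by
    have hproj : Computable (fun x : ℕ => x.unpair.2.unpair.1) :=
      ((Primrec.fst.comp Primrec.unpair).comp (Primrec.snd.comp Primrec.unpair)).to_comp
    have hFF : Computable₂ (fun (x b : ℕ) => b + 2 * x.unpair.2.unpair.2) :=
      ((Primrec.nat_add.comp Primrec.snd
        (Primrec.nat_mul.comp (Primrec.const 2)
          ((Primrec.snd.comp Primrec.unpair).comp
            ((Primrec.snd.comp Primrec.unpair).comp Primrec.fst)))).to₂).to_comp
    exact recIn_map (recIn_oracle_comp hproj) hFF
  have hPV : RecursiveIn O (Nat.unpaired fun a n =>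
      n.rec ((pure 0 : ℕ →. ℕ) a) fun y IH => do let i ← IH; gV (Nat.pair a (Nat.pair y i))) :=
    RecursiveIn.prec .zero hgV
  have hval : ∀ m : ℕ, (Nat.unpaired fun a n =>
      n.rec ((pure 0 : ℕ →. ℕ) a) fun y IH => do let i ← IH; gV (Nat.pair a (Nat.pair y i)))
        (Nat.pair 0 m) = Part.some (v A m) := by
    intro m
    induction m with
    | zero => simp [Nat.unpaired, Nat.unpair_pair]; rfl
    | succ m ih =>
      simp only [Nat.unpaired, Nat.unpair_pair] at ih ⊢
      show (Nat.rec _ _ m : Part ℕ).bind (fun i => gV (Nat.pair 0 (Nat.pair m i))) = _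
      rw [show (Nat.rec _ _ m : Part ℕ) = Part.some (v A m) from ih, Part.bind_some]
      rw [hgVdef]
      simp only [Nat.unpair_pair, hO, chiSeq]
      rw [Part.map_some]
      congr 1
      rw [v_succ]
      cases A m <;> simp <;> omega
  have hcPair : Computable (fun n : ℕ => Nat.pair 0 n.unpair.1) :=
    (Primrec₂.natPair.comp (Primrec.const 0) (Primrec.fst.comp Primrec.unpair)).to_comp
  have h1 : RecursiveIn O (fun n => Part.some (v A n.unpair.1)) :=
    recIn_of_eq (recIn_comp_computable hPV hcPair) fun n => hval n.unpair.1
  have hIf : Computable₂ (fun (n val : ℕ) => if n.unpair.2 ≤ val then 1 else 0) :=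
    ((Primrec.ite (PrimrecRel.comp Primrec.nat_le
        ((Primrec.snd.comp Primrec.unpair).comp Primrec.fst) Primrec.snd)
      (Primrec.const 1) (Primrec.const 0)).to₂).to_comp
  refine recIn_of_eq (recIn_map h1 hIf) fun n => ?_
  rw [Part.map_some]
  show _ = Part.some (if n ∈ B then 1 else 0)
  congr 1
  exact if_congr (hmem n).symm rfl rfl

theorem turing2 {A : ℕ → Bool} {B : Set ℕ}
    (hmem : ∀ n : ℕ, n ∈ B ↔ n.unpair.2 ≤ v A n.unpair.1) :
    RecursiveIn (chi B) (chiSeq A) := by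
  set O := chi B with hO
  set gQ : ℕ →. ℕ := fun x =>
    (O (Nat.pair x.unpair.1 (x.unpair.2.unpair.1 + 1))).map
      (fun b => x.unpair.2.unpair.2 + b) with hgQdef
  have hgQ : RecursiveIn O gQ := by
    have hproj : Computable (fun x : ℕ => Nat.pair x.unpair.1 (x.unpair.2.unpair.1 + 1)) :=
      (Primrec₂.natPair.comp (Primrec.fst.comp Primrec.unpair)
        (Primrec.succ.comp ((Primrec.fst.comp Primrec.unpair).comp
          (Primrec.snd.comp Primrec.unpair)))).to_comp
    have hFF : Computable₂ (fun (x b : ℕ) => x.unpair.2.unpair.2 + b) :=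
      ((Primrec.nat_add.comp
        ((Primrec.snd.comp Primrec.unpair).comp
          ((Primrec.snd.comp Primrec.unpair).comp Primrec.fst)) Primrec.snd).to₂).to_comp
    exact recIn_map (recIn_oracle_comp hproj) hFF
  have hPQ : RecursiveIn O (Nat.unpaired fun a n =>
      n.rec ((pure 0 : ℕ →. ℕ) a) fun y IH => do let i ← IH; gQ (Nat.pair a (Nat.pair y i))) :=
    RecursiveIn.prec .zero hgQ
  have hval : ∀ m j : ℕ, (Nat.unpaired fun a n =>
      n.rec ((pure 0 : ℕ →. ℕ) a) fun y IH => do let i ← IH; gQ (Nat.pair a (Nat.pair y i)))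
        (Nat.pair m j) = Part.some (min j (v A m)) := by
    intro m j
    induction j with
    | zero => simp [Nat.unpaired, Nat.unpair_pair]; rfl
    | succ j ih =>
      simp only [Nat.unpaired, Nat.unpair_pair] at ih ⊢
      show (Nat.rec _ _ j : Part ℕ).bind (fun i => gQ (Nat.pair m (Nat.pair j i))) = _
      rw [show (Nat.rec _ _ j : Part ℕ) = Part.some (min j (v A m)) from ih, Part.bind_some]
      rw [hgQdef]
      simp only [Nat.unpair_pair, hO, chi]
      rw [Part.map_some]
      congr 1
      have hb : (Nat.pair m (j+1)) ∈ B ↔ j + 1 ≤ v A m := by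
        rw [hmem (Nat.pair m (j+1)), Nat.unpair_pair]
      by_cases hc : j + 1 ≤ v A m
      · rw [if_pos (hb.2 hc)]
        omega
      · rw [if_neg (fun h => hc (hb.1 h))]
        omega
  have h1 : RecursiveIn O (fun m => Part.some (v A m)) := by
    have hcP : Computable (fun m : ℕ => Nat.pair m (2^m)) :=
      (Primrec₂.natPair.comp Primrec.id
        ((Primrec₂.unpaired'.1 Nat.Primrec.pow).comp (Primrec.const 2) Primrec.id)).to_comp
    refine recIn_of_eq (recIn_comp_computable hPQ hcP) fun m => ?_
    rw [hval m (2^m)]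
    congr 1
    exact Nat.min_eq_right (le_of_lt (v_lt A m))
  have h2 : RecursiveIn O (fun m => Part.some (v A (m+1))) := by
    have hcP : Computable (fun m : ℕ => Nat.pair (m+1) (2^(m+1))) :=
      (Primrec₂.natPair.comp Primrec.succ
        ((Primrec₂.unpaired'.1 Nat.Primrec.pow).comp (Primrec.const 2) Primrec.succ)).to_comp
    refine recIn_of_eq (recIn_comp_computable hPQ hcP) fun m => ?_
    rw [hval (m+1) (2^(m+1))]
    congr 1
    exact Nat.min_eq_right (le_of_lt (v_lt A (m+1)))
  have h3 : RecursiveIn O (fun m => Part.some (Nat.pair (v A m) (v A (m+1)))) := by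
    refine recIn_of_eq (RecursiveIn.pair h1 h2) fun m => ?_
    simp [Seq.seq]
  have hSub : Computable₂ (fun (_ c : ℕ) => c.unpair.2 - 2 * c.unpair.1) :=
    ((Primrec.nat_sub.comp
      ((Primrec.snd.comp Primrec.unpair).comp Primrec.snd)
      (Primrec.nat_mul.comp (Primrec.const 2)
        ((Primrec.fst.comp Primrec.unpair).comp Primrec.snd))).to₂).to_comp
  refine recIn_of_eq (recIn_map h3 hSub) fun m => ?_
  rw [Part.map_some]
  show _ = chiSeq A m
  rw [chiSeq]
  congr 1
  rw [Nat.unpair_pair]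
  simp only []
  rw [v_succ]
  cases A m <;> simp


/-! #### Kolmogorov complexity comparison -/

theorem kc_le {U : Str →. Str} (hU : OptimalPF U) {F : Str → Str} (hF : Computable F) :
    ∃ c : ℕ, ∀ σ : Str, KC U (F σ) ≤ KC U σ + c := by
  set M : Str →. Str := fun ρ => (U ρ).map F with hMdef
  have hPF : PFMachine M := by
    constructor
    · exact Partrec.map hU.1.1 (hF.comp Computable.snd).to₂
    · intro ρ₁ ρ₂ h₁ h₂ hpre
      exact hU.1.2 ρ₁ ρ₂ h₁ h₂ hpre
  obtain ⟨c, hc⟩ := hU.2 M hPF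
  refine ⟨c, fun σ => le_trans (hc (F σ)) ?_⟩
  have hle : KC M (F σ) ≤ KC U σ := by
    refine le_iInf fun ρ => ?_
    exact iInf_le_of_le ⟨ρ.1, Part.mem_map F ρ.2⟩ le_rfl
  exact add_le_add_left hle c

/-! #### The reduction map on strings -/

def Fmap : Str → Str := fun σ =>
  (List.range σ.length).map
    (fun i => decide (i.unpair.2 ≤ valStr σ / 2 ^ (σ.length - i.unpair.1)))

theorem Fmap_computable : Computable Fmap := by
  have hvalP : Primrec valStr := by
    have hstep : Primrec₂ (fun (_ : Str) (p : ℕ × Bool) => 2 * p.1 + cond p.2 1 0) :=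
      ((Primrec.nat_add.comp
        (Primrec.nat_mul.comp (Primrec.const 2) (Primrec.fst.comp Primrec.snd))
        (Primrec.cond (Primrec.snd.comp Primrec.snd)
          (Primrec.const 1) (Primrec.const 0))).to₂)
    exact (Primrec.list_foldl Primrec.id (Primrec.const 0) hstep).of_eq fun σ => rfl
  have npow : Primrec₂ ((· ^ ·) : ℕ → ℕ → ℕ) := Primrec₂.unpaired'.1 Nat.Primrec.pow
  have hinner : Primrec₂ (fun (σ : Str) (i : ℕ) =>
      decide (i.unpair.2 ≤ valStr σ / 2 ^ (σ.length - i.unpair.1))) := by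
    have := PrimrecRel.comp Primrec.nat_le
      ((Primrec.snd.comp Primrec.unpair).comp (Primrec.snd (β := ℕ)))
      (Primrec.nat_div.comp (hvalP.comp (Primrec.fst (β := ℕ)))
        (npow.comp (Primrec.const 2)
          (Primrec.nat_sub.comp (Primrec.list_length.comp Primrec.fst)
            ((Primrec.fst.comp Primrec.unpair).comp Primrec.snd))))
    exact this.decide
  exact (Primrec.list_map (Primrec.list_range.comp Primrec.list_length) hinner).to_comp

theorem Fmap_eq {A : ℕ → Bool} {B : Set ℕ}
    (hmem : ∀ n : ℕ, n ∈ B ↔ n.unpair.2 ≤ v A n.unpair.1) (n : ℕ) :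
    Fmap (restrSeq A n) = restrSet B n := by
  have hlen : (restrSeq A n).length = n := by simp [restrSeq]
  rw [Fmap, hlen, restrSet]
  refine List.map_congr_left fun i hi => ?_
  have hin : i < n := List.mem_range.1 hi
  have hm : i.unpair.1 ≤ n := le_trans (Nat.unpair_left_le i) (le_of_lt hin)
  have hv : valStr (restrSeq A n) / 2 ^ (n - i.unpair.1) = v A i.unpair.1 := v_div A hm
  rw [hv]
  exact decide_eq_decide.2 (hmem i).symm

end S4

/-- For every c.e. real `A` there is a c.e. set `B` Turing equivalent
to `A` with `K(B↾n) ≤ K(A↾n) + c` for all `n`; moreover `B` is computable from `A` via a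
reduction in which the first `n` bits of `B` are computed from the first `n` bits of `A`. -/
theorem stmt4 (U : Str →. Str) (hU : OptimalPF U)
    (A : ℕ → Bool) (hA : CEReal A) :
    ∃ B : Set ℕ, CESet B ∧ TuringEquivSetSeq B A ∧
      (∃ c : ℕ, ∀ n, KC U (restrSet B n) ≤ KC U (restrSeq A n) + c) ∧
      ∃ F : Str → Str, Computable F ∧ ∀ n, F (restrSeq A n) = restrSet B n := by
  classical
  by_cases hconst : ∃ N b, ∀ n, N ≤ n → A n = b
  · -- Case 1: the binary expansion is eventually constant, hence computable.
    obtain ⟨N, b, hNb⟩ := hconst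
    have hAeq : A = fun n => (((List.range N).map A).getD n b) := by
      funext n
      rcases lt_or_ge n N with h | h
      · rw [List.getD_eq_getElem?_getD]
        simp [List.getElem?_range, h]
      · rw [List.getD_eq_getElem?_getD, List.getElem?_eq_none (by simpa using h)]
        simp [hNb n h]
    have hAcomp : Computable A := by
      rw [hAeq]
      exact ((Primrec.list_getD b).comp (Primrec.const _) Primrec.id).to_comp
    have hchi : chi {n : ℕ | A n = true} = chiSeq A := by
      funext n
      cases hn : A n <;> simp [chi, chiSeq, Set.mem_setOf_eq, hn]
    have hres : ∀ n, restrSet {n : ℕ | A n = true} n = restrSeq A n := by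
      intro n
      simp only [restrSet, restrSeq]
      refine List.map_congr_left fun i _ => ?_
      cases hAi : A i
      · exact @decide_eq_false (i ∈ {n : ℕ | A n = true})
          (Classical.propDecidable _) (by simp [Set.mem_setOf_eq, hAi])
      · exact @decide_eq_true (i ∈ {n : ℕ | A n = true})
          (Classical.propDecidable _) (show i ∈ {n : ℕ | A n = true} from hAi)
    refine ⟨{n : ℕ | A n = true}, ?_, ?_, ?_, ?_⟩
    · -- CESet
      have hp : Partrec₂ (fun (n _ : ℕ) => (Part.some (A n) : Part Bool)) :=
        ((hAcomp.comp Computable.fst).to₂).partrec₂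
      refine ⟨_, Partrec.nat_iff.1 (Partrec.rfind hp), fun n => ?_⟩
      refine Iff.trans ?_ Nat.rfind_dom.symm
      constructor
      · intro hn
        exact ⟨0, Part.mem_some_iff.2 hn.symm, fun {m} _ => trivial⟩
      · rintro ⟨s, hs, -⟩
        exact (Part.mem_some_iff.1 hs).symm
    · exact ⟨hchi ▸ RecursiveIn.oracle, hchi ▸ RecursiveIn.oracle⟩
    · exact ⟨0, fun n => by rw [hres n]; simp⟩
    · exact ⟨id, Computable.id, fun n => (hres n).symm⟩
  · -- Case 2: no tail of the expansion is constant.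
    push_neg at hconst
    have hT : ∀ N, ∃ i, N ≤ i ∧ A i = true := by
      intro N
      obtain ⟨i, hi, hne⟩ := hconst N false
      exact ⟨i, hi, by simpa using hne⟩
    have hFa : ∀ N, ∃ i, N ≤ i ∧ A i = false := by
      intro N
      obtain ⟨i, hi, hne⟩ := hconst N true
      exact ⟨i, hi, by simpa using hne⟩
    obtain ⟨f, hfcomp, hfmono, hflim⟩ := hA
    set B : Set ℕ := {n : ℕ | ∃ s : ℕ, (n.unpair.2 : ℤ) * 2^s ≤ f s * 2^(n.unpair.1)} with hBdef
    have hmem : ∀ n : ℕ, n ∈ B ↔ n.unpair.2 ≤ S4.v A n.unpair.1 := by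
      intro n
      exact S4.claim1 hfmono hflim hT hFa n.unpair.1 n.unpair.2
    obtain ⟨c, hc⟩ := S4.kc_le hU S4.Fmap_computable
    refine ⟨B, S4.cese hfcomp, ⟨S4.turing1 hmem, S4.turing2 hmem⟩, ⟨c, fun n => ?_⟩,
      ⟨S4.Fmap, S4.Fmap_computable, fun n => S4.Fmap_eq hmem n⟩⟩
    rw [← S4.Fmap_eq hmem n]
    exact hc (restrSeq A n)


end KPaper
end

section
/- Let B be a computably enumerable set with a computable enumeration (B_s), and let m_n[s] be a uniformly computable (possibly partial) system of marker positions satisfying: (i) monotonicity on stages: if m_n[s] and m_n[s+1] are both defined then m_n[s] ≤ m_n[s+1]; (ii) monotonicity on indices: if m_n[s] and m_{n+1}[s] are both defined then m_n[s] < m_{n+1}[s]; (iii) consistency: if m_n[s] and m_n[t] are defined, m_n[s] ≠ m_n[t] and s < t, then m_n[s] ∈ B; (iv) convergence: for every n there exist t and k such that m_n[s] is defined and equal to k for all s > t; (v) coding: for all n, n ∈ ∅′ if and only if m_n ∈ B, where m_n = lim_s m_n[s]. Then the halting problem ∅′ is Turing reducible to B. -/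
open Part Filter

open scoped Classical

namespace KPaper

-- AUX START
theorem partrec_recursiveIn {O : ℕ →. ℕ} {f : ℕ →. ℕ} (h : Nat.Partrec f) :
    RecursiveIn O f := by
  induction h with
  | zero => exact .zero
  | succ => exact .succ
  | left => exact .left
  | right => exact .right
  | pair _ _ hf hg => exact .pair hf hg
  | comp _ _ hf hg => exact .comp hf hg
  | prec _ _ hf hg => exact .prec hf hg
  | rfind _ hf => exact .rfind hf

theorem RecursiveIn.of_eq {O f g : ℕ →. ℕ} (h : RecursiveIn O f) (H : ∀ n, f n = g n) :
    RecursiveIn O g := (funext H : f = g) ▸ h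

theorem computable_recursiveIn {O : ℕ →. ℕ} {f : ℕ → ℕ} (h : Computable f) :
    RecursiveIn O ↑f := partrec_recursiveIn (Partrec.nat_iff.1 h)

theorem reduction_aux (B : Set ℕ) (a : ℕ → ℕ) (ha : Computable a)
    (F : ℕ → ℕ) (hF : Computable F) (o : ℕ → ℕ) (ho : Computable o) :
    RecursiveIn (chi B) fun n =>
      (Nat.rfind fun r => (fun m => m = 0) <$>
        ((↑(fun p => F (Nat.pair p (if a p ∈ B then 1 else 0)) : ℕ → ℕ) : ℕ →. ℕ)
          (Nat.pair n r)))
      >>= fun r => Part.some (o (Nat.pair n r)) := by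
  have hid : RecursiveIn (chi B) (↑(fun n : ℕ => n) : ℕ →. ℕ) :=
    computable_recursiveIn Computable.id
  have h1 : RecursiveIn (chi B) fun p => (↑a : ℕ →. ℕ) p >>= chi B :=
    .comp .oracle (computable_recursiveIn ha)
  have h2 := RecursiveIn.pair hid h1
  have h3 := RecursiveIn.comp (computable_recursiveIn hF) h2
  have h3' : RecursiveIn (chi B)
      (↑(fun p => F (Nat.pair p (if a p ∈ B then 1 else 0)) : ℕ → ℕ) : ℕ →. ℕ) := by
    refine h3.of_eq fun p => ?_
    simp [chi, Seq.seq, PFun.coe_val]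
    show Part.bind (Part.map (Nat.pair p) (Part.bind (Part.some (a p)) (fun y => chi B y))) (fun x => Part.some (F x)) = _
    simp only [Part.bind_some, chi, Part.map_some]
  have hR := RecursiveIn.rfind h3'
  have h4 := RecursiveIn.pair hid hR
  have h5 := RecursiveIn.comp (computable_recursiveIn ho) h4
  refine h5.of_eq fun n => ?_
  simp [Seq.seq, PFun.coe_val, Part.bind_assoc]
  exact Part.bind_map _ _ _
-- AUX END

/-- If `B` is a c.e. set with computable enumeration `(B_s)`, `(∅'_s)`
is a fixed computable enumeration of the halting problem, and `m n s` is a uniformly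
computable partial system of marker positions satisfying monotonicity on stages,
monotonicity on indices, consistency, convergence and coding, then `∅' ≤_T B`. -/
theorem stmt14
    (Bseq : ℕ → ℕ → Bool) (hBcomp : Computable₂ Bseq)
    (hBmono : ∀ s n, Bseq s n = true → Bseq (s + 1) n = true)
    (B : Set ℕ) (hB : B = {n | ∃ s, Bseq s n = true})
    (Hseq : ℕ → ℕ → Bool) (hHcomp : Computable₂ Hseq)
    (hHmono : ∀ s n, Hseq s n = true → Hseq (s + 1) n = true)
    (hH : haltingSet = {n | ∃ s, Hseq s n = true})
    (m : ℕ → ℕ →. ℕ) (hm : Partrec₂ m)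
    -- (i) monotonicity on stages
    (hstage : ∀ n s x y, x ∈ m n s → y ∈ m n (s + 1) → x ≤ y)
    -- (ii) monotonicity on indices
    (hindex : ∀ n s x y, x ∈ m n s → y ∈ m (n + 1) s → x < y)
    -- (iii) consistency
    (hcons : ∀ n s t x y, x ∈ m n s → y ∈ m n t → x ≠ y → s < t → x ∈ B)
    -- (iv) convergence
    (hconv : ∀ n, ∃ t k, ∀ s, t < s → k ∈ m n s)
    -- (v) coding: `n ∈ ∅'` iff the limit marker position is in `B`
    (hcode : ∀ n t k, (∀ s, t < s → k ∈ m n s) → (n ∈ haltingSet ↔ k ∈ B)) :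
    RecursiveIn (chi B) (chi haltingSet) := by
    -- code for m
  have hm' : Partrec fun p : ℕ => m p.unpair.1 p.unpair.2 :=
    hm.comp (Computable.fst.comp Computable.unpair) (Computable.snd.comp Computable.unpair)
  obtain ⟨cm, hcm⟩ := Nat.Partrec.Code.exists_code.1 (Partrec.nat_iff.1 hm')
  have hmem : ∀ n s k, k ∈ m n s ↔ k ∈ cm.eval (Nat.pair n s) := by
    intro n s k; rw [hcm]; simp
  -- Hseq monotone
  have hHle : ∀ n s t, s ≤ t → Hseq s n = true → Hseq t n = true := by
    intro n s t hst h
    induction t, hst using Nat.le_induction with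
    | base => exact h
    | succ t _ ih => exact hHmono t n ih
  -- the total functions
  set a : ℕ → ℕ := fun p =>
    (Nat.Partrec.Code.evaln p.unpair.2.unpair.2 cm
      (Nat.pair p.unpair.1 p.unpair.2.unpair.1)).getD 0 with ha_def
  set F : ℕ → ℕ := fun q =>
    bif (Nat.Partrec.Code.evaln q.unpair.1.unpair.2.unpair.2 cm
      (Nat.pair q.unpair.1.unpair.1 q.unpair.1.unpair.2.unpair.1)).isSome then
      (bif Hseq q.unpair.1.unpair.2.unpair.1 q.unpair.1.unpair.1 then 0 else q.unpair.2)
    else 1 with hF_def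
  set o : ℕ → ℕ := fun q => bif Hseq q.unpair.2.unpair.1 q.unpair.1 then 1 else 0 with ho_def
  set g : ℕ → ℕ := fun p => F (Nat.pair p (if a p ∈ B then 1 else 0)) with hg_def
  -- computability
  have pu1 : Primrec fun p : ℕ => p.unpair.1 := Primrec.fst.comp Primrec.unpair
  have pu2 : Primrec fun p : ℕ => p.unpair.2 := Primrec.snd.comp Primrec.unpair
  have pev : Primrec fun x : ℕ × ℕ × ℕ =>
      Nat.Partrec.Code.evaln x.2.2 cm (Nat.pair x.1 x.2.1) :=
    Nat.Partrec.Code.primrec_evaln.comp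
      (((Primrec.snd.comp Primrec.snd).pair (Primrec.const cm)).pair
        (Primrec₂.natPair.comp Primrec.fst (Primrec.fst.comp Primrec.snd)))
  have pargs : Primrec fun p : ℕ => (p.unpair.1, p.unpair.2.unpair.1, p.unpair.2.unpair.2) :=
    pu1.pair ((pu1.comp pu2).pair (pu2.comp pu2))
  have pevp : Primrec fun p : ℕ =>
      Nat.Partrec.Code.evaln p.unpair.2.unpair.2 cm (Nat.pair p.unpair.1 p.unpair.2.unpair.1) :=
    pev.comp pargs
  have ha : Computable a :=
    (Primrec.option_getD.comp pevp (Primrec.const 0)).to_comp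
  have hF : Computable F := by
    refine Computable.cond ((Primrec.option_isSome.comp (pevp.comp pu1)).to_comp) ?_
      (Computable.const 1)
    exact Computable.cond
      (hHcomp.comp ((pu1.comp (pu2.comp pu1)).to_comp) ((pu1.comp pu1).to_comp))
      (Computable.const 0) (pu2.to_comp)
  have ho : Computable o :=
    Computable.cond (hHcomp.comp ((pu1.comp pu2).to_comp) (pu1.to_comp))
      (Computable.const 1) (Computable.const 0)
  -- characterization of g
  have hg0 : ∀ n r, g (Nat.pair n r) = 0 ↔ ∃ k,
      Nat.Partrec.Code.evaln r.unpair.2 cm (Nat.pair n r.unpair.1) = Option.some k ∧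
      (Hseq r.unpair.1 n = true ∨ k ∉ B) := by
    intro n r
    rcases hE : Nat.Partrec.Code.evaln r.unpair.2 cm (Nat.pair n r.unpair.1) with _ | k
    · simp [hg_def, hF_def, hE]
    · have hak : a (Nat.pair n r) = k := by simp [ha_def, hE]
      by_cases hHs : Hseq r.unpair.1 n = true
      · simp [hg_def, hF_def, hE, hHs]
      · by_cases hkB : k ∈ B
        · simp [hg_def, hF_def, hak, hE, hHs, hkB]
        · simp [hg_def, hF_def, hak, hE, hHs, hkB]
  -- soundness
  have hsound : ∀ n r, g (Nat.pair n r) = 0 → (n ∈ haltingSet ↔ Hseq r.unpair.1 n = true) := by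
    intro n r h0
    obtain ⟨k, hE, hOr⟩ := (hg0 n r).1 h0
    have hks : k ∈ m n r.unpair.1 := (hmem _ _ _).2 (Nat.Partrec.Code.evaln_sound hE)
    constructor
    · intro hn
      rcases hOr with h | hkB
      · exact h
      · exfalso
        obtain ⟨t, k', hk'⟩ := hconv n
        have hk's : k' ∈ m n (max r.unpair.1 t + 1) :=
          hk' _ (Nat.lt_succ_of_le (le_max_right _ _))
        have hkk' : k = k' := by
          by_contra hne
          exact hkB (hcons n r.unpair.1 (max r.unpair.1 t + 1) k k' hks hk's hne
            (Nat.lt_succ_of_le (le_max_left _ _)))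
        exact hkB (hkk' ▸ ((hcode n t k' hk').1 hn))
    · intro h
      rw [hH]; exact ⟨r.unpair.1, h⟩
  -- termination
  have hterm : ∀ n, ∃ r, g (Nat.pair n r) = 0 := by
    intro n
    obtain ⟨t, k, hk⟩ := hconv n
    by_cases hn : n ∈ haltingSet
    · obtain ⟨s0, hs0⟩ : ∃ s0, Hseq s0 n = true := by rwa [hH] at hn
      have hks : k ∈ m n (max s0 (t + 1)) :=
        hk _ (lt_of_lt_of_le (Nat.lt_succ_self t) (le_max_right _ _))
      obtain ⟨u, hu⟩ := Nat.Partrec.Code.evaln_complete.1 ((hmem _ _ _).1 hks)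
      refine ⟨Nat.pair (max s0 (t + 1)) u, (hg0 n _).2 ⟨k, ?_, Or.inl ?_⟩⟩
      · simpa [Option.mem_def] using hu
      · simpa using hHle n s0 _ (le_max_left _ _) hs0
    · have hkB : k ∉ B := fun hkB => hn ((hcode n t k hk).2 hkB)
      have hks : k ∈ m n (t + 1) := hk _ (Nat.lt_succ_self t)
      obtain ⟨u, hu⟩ := Nat.Partrec.Code.evaln_complete.1 ((hmem _ _ _).1 hks)
      exact ⟨Nat.pair (t + 1) u, (hg0 n _).2 ⟨k, by simpa [Option.mem_def] using hu,
        Or.inr hkB⟩⟩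
  -- put it together
  have hred := reduction_aux B a ha F hF o ho
  refine hred.of_eq fun n => ?_
  set p : ℕ →. Bool := fun r => (fun m => m = 0) <$>
    ((↑(fun p => F (Nat.pair p (if a p ∈ B then 1 else 0)) : ℕ → ℕ) : ℕ →. ℕ)
      (Nat.pair n r)) with hp_def
  have hpval : ∀ r, p r = Part.some (decide (g (Nat.pair n r) = 0)) := by
    intro r; simp [hp_def, hg_def, PFun.coe_val, Part.map_some]
  have hr0 : Nat.find (hterm n) ∈ Nat.rfind p := by
    refine Nat.mem_rfind.2 ⟨?_, fun {mm} hmm => ?_⟩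
    · rw [hpval]; simp [Nat.find_spec (hterm n)]
    · rw [hpval]; simp [Nat.find_min (hterm n) hmm]
  have hiff := hsound n (Nat.find (hterm n)) (Nat.find_spec (hterm n))
  have hchi : chi haltingSet n = Part.some (if n ∈ haltingSet then 1 else 0) := rfl
  rw [hchi, Part.eq_some_iff]
  refine Part.mem_bind_iff.2 ⟨Nat.find (hterm n), hr0, ?_⟩
  rw [Part.mem_some_iff, ho_def]
  by_cases hn : n ∈ haltingSet
  · simp [hn, hiff.1 hn]
  · have : Hseq (Nat.find (hterm n)).unpair.1 n = false := by
      rcases Bool.eq_false_or_eq_true (Hseq (Nat.find (hterm n)).unpair.1 n) with h | h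
      · exact absurd (hiff.2 h) hn
      · exact h
    simp [hn, this]


end KPaper
end
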